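/- In the 3-dimensional hypercube Q_3 there exists a triametral triple of vertices x, y, z (i.e. d(x,y) + d(x,z) + d(y,z) = tr(Q_3)) with d(x,y) = d(x,z) = d(y,z) = 2, so that no pair from this triple is diametral (since diam(Q_3) = 3); in particular, a triametral triple in a connected graph need not contain a diametral pair. -/

import Mathlib

/-- The triameter of a graph `G`: the maximum of `d(a,b) + d(a,c) + d(b,c)`
over all triples of vertices `a, b, c`. -/
noncomputable def SimpleGraph.triameter {V : Type*} [Fintype V] (G : SimpleGraph V) : ℕ :=
  Finset.univ.sup fun p : V × V × V =>
    G.dist p.1 p.2.1 + G.dist p.1 p.2.2 + G.dist p.2.1 p.2.2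

/-- The `n`-cube `Q_n`: vertices are `{0,1}^n`, two vertices are adjacent iff
they differ in exactly one coordinate. -/
def cubeGraph (n : ℕ) : SimpleGraph (Fin n → Bool) where
  Adj x y := ∃! i : Fin n, x i ≠ y i
  symm := by
    constructor
    rintro x y ⟨i, hi, hu⟩
    exact ⟨i, hi.symm, fun j hj => hu j hj.symm⟩
  loopless := by
    constructor
    rintro x ⟨i, hi, -⟩
    exact hi rfl

/-!
The graph distance of `Q_n` is the Hamming distance. In every coordinate at most two of the
three pairs of a triple `x, y, z` differ, since only two values are available, so
`tr(Q_n) ≤ 2n`; any triple with pairwise distances `2` in `Q_3` attains this bound although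
its distances stay below `diam(Q_3) = 3`.
-/

namespace SimpleGraph

variable {V : Type*} [Fintype V] (G : SimpleGraph V)

theorem dist_add_dist_add_dist_le_triameter (a b c : V) :
    G.dist a b + G.dist a c + G.dist b c ≤ G.triameter :=
  Finset.le_sup
    (f := fun p : V × V × V => G.dist p.1 p.2.1 + G.dist p.1 p.2.2 + G.dist p.2.1 p.2.2)
    (Finset.mem_univ (a, b, c))

theorem triameter_le {k : ℕ} (h : ∀ a b c, G.dist a b + G.dist a c + G.dist b c ≤ k) :
    G.triameter ≤ k :=
  Finset.sup_le fun p _ => h p.1 p.2.1 p.2.2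

end SimpleGraph

theorem hammingDist_add_hammingDist_add_hammingDist_le {ι : Type*} [Fintype ι]
    (x y z : ι → Bool) :
    hammingDist x y + hammingDist x z + hammingDist y z ≤ 2 * Fintype.card ι := by
  simp only [hammingDist, Finset.card_filter, ← Finset.sum_add_distrib]
  calc _ ≤ ∑ _i : ι, 2 := Finset.sum_le_sum fun i _ => by
        cases x i <;> cases y i <;> cases z i <;> decide
    _ = 2 * Fintype.card ι := by rw [Finset.sum_const, smul_eq_mul, mul_comm, Finset.card_univ]

theorem hammingDist_false_true {ι : Type*} [Fintype ι] :
    hammingDist (fun _ : ι => false) (fun _ => true) = Fintype.card ι := by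
  simp [hammingDist]

namespace cubeGraph

variable {n : ℕ}

theorem adj_iff {x y : Fin n → Bool} : (cubeGraph n).Adj x y ↔ hammingDist x y = 1 := by
  rw [hammingDist, Finset.card_eq_one_iff_existsUnique]
  simp [cubeGraph]

theorem adj_update {x : Fin n → Bool} {i : Fin n} {b : Bool} (hb : x i ≠ b) :
    (cubeGraph n).Adj x (Function.update x i b) := by
  refine ⟨i, by simpa using hb, fun j hj => ?_⟩
  by_contra hji
  exact hj (Function.update_of_ne hji b x).symm

theorem hammingDist_le_length {x y : Fin n → Bool} (w : (cubeGraph n).Walk x y) :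
    hammingDist x y ≤ w.length := by
  induction w with
  | nil => simp
  | @cons u v w h p ih =>
    calc hammingDist u w ≤ hammingDist u v + hammingDist v w := hammingDist_triangle u v w
      _ ≤ 1 + p.length := by rw [adj_iff.mp h]; omega
      _ = (p.cons h).length := by rw [SimpleGraph.Walk.length_cons, add_comm]

theorem edist_le_card_of_eqOn_compl {s : Finset (Fin n)} {x y : Fin n → Bool}
    (h : ∀ i ∉ s, x i = y i) : (cubeGraph n).edist x y ≤ s.card := by
  induction s using Finset.induction_on generalizing x with
  | empty => simp [funext fun i => h i (Finset.notMem_empty i)]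
  | insert i s hi ih =>
    set x' := Function.update x i (y i)
    have hstep : (cubeGraph n).edist x x' ≤ 1 := by
      by_cases hxi : x i = y i
      · simp [x', ← hxi]
      · exact (SimpleGraph.edist_eq_one_iff_adj.mpr (adj_update hxi)).le
    have hrest : (cubeGraph n).edist x' y ≤ s.card := ih fun j hj => by
      by_cases hji : j = i
      · simp [x', hji]
      · simpa [x', Function.update_of_ne hji] using h j (by simp [hji, hj])
    calc (cubeGraph n).edist x y ≤ (cubeGraph n).edist x x' + (cubeGraph n).edist x' y :=
          SimpleGraph.edist_triangle
      _ ≤ 1 + s.card := add_le_add hstep hrest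
      _ = (insert i s).card := by rw [Finset.card_insert_of_notMem hi]; push_cast; ring

theorem edist_eq_hammingDist (x y : Fin n → Bool) :
    (cubeGraph n).edist x y = hammingDist x y := by
  have hle : (cubeGraph n).edist x y ≤ hammingDist x y :=
    edist_le_card_of_eqOn_compl (s := {i | x i ≠ y i}) fun i hi => by simpa using hi
  refine le_antisymm hle ?_
  obtain ⟨w, hw⟩ := SimpleGraph.exists_walk_of_edist_ne_top (hle.trans_lt (by simp)).ne
  rw [← hw]
  exact_mod_cast hammingDist_le_length w

theorem dist_eq_hammingDist (x y : Fin n → Bool) : (cubeGraph n).dist x y = hammingDist x y := by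
  simp [SimpleGraph.dist, edist_eq_hammingDist]

theorem triameter_eq (n : ℕ) : (cubeGraph n).triameter = 2 * n := by
  refine le_antisymm ((cubeGraph n).triameter_le fun a b c => ?_) ?_
  · simpa [dist_eq_hammingDist] using hammingDist_add_hammingDist_add_hammingDist_le a b c
  · have := (cubeGraph n).dist_add_dist_add_dist_le_triameter
      (fun _ => false) (fun _ => true) (fun _ => false)
    simpa [dist_eq_hammingDist, hammingDist_false_true, hammingDist_comm, two_mul] using this

theorem ediam_eq (n : ℕ) : (cubeGraph n).ediam = n := by
  refine le_antisymm (SimpleGraph.ediam_le_of_edist_le fun u v => ?_) ?_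
  · rw [edist_eq_hammingDist]
    exact_mod_cast hammingDist_le_card_fintype.trans (Fintype.card_fin n).le
  · calc (n : ℕ∞) = (cubeGraph n).edist (fun _ => false) (fun _ => true) := by
          rw [edist_eq_hammingDist, hammingDist_false_true, Fintype.card_fin]
      _ ≤ (cubeGraph n).ediam := SimpleGraph.edist_le_ediam

theorem diam_eq (n : ℕ) : (cubeGraph n).diam = n := by
  simp [SimpleGraph.diam, ediam_eq]

end cubeGraph

/-- In `Q_3` there is a triametral triple whose three pairwise distances all equal `2`;
since `diam(Q_3) = 3`, no pair of this triple is diametral. -/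
theorem cube_three_triametral_triple_no_diametral_pair :
    ∃ x y z : Fin 3 → Bool,
      (cubeGraph 3).dist x y + (cubeGraph 3).dist x z + (cubeGraph 3).dist y z =
        (cubeGraph 3).triameter ∧
      (cubeGraph 3).dist x y = 2 ∧ (cubeGraph 3).dist x z = 2 ∧ (cubeGraph 3).dist y z = 2 ∧
      (cubeGraph 3).diam = 3 := by
  refine ⟨![false, true, true], ![true, false, true], ![true, true, false], ?_⟩
  simp only [cubeGraph.dist_eq_hammingDist, cubeGraph.triameter_eq, cubeGraph.diam_eq]
  decide
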